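/- Define u : ℝ⁴ × ℝ³ → ℝ by u(x, t) = ‖t‖ − (2/√3)‖x‖². Then at every point (x, t) with ‖x‖ > 0 and ‖t‖ = (2/√3)‖x‖², the horizontal mean curvature vanishes: H⁰ = 0. In other words, the hypersurface {(x,t) : ‖t‖ = √(4/3)·‖x‖²} is horizontally minimal away from the origin. -/

import Mathlib

/-!
Write `u_a(x,t) = ‖t‖ − a‖x‖²` and `Bᵢ = ½ ξᵢ‖t‖² = Σₖ tₖ ξᵢtₖ`. For each `k` the vector
`(ξᵢtₖ)ᵢ ∈ ℝ⁴` is `2Jₖx` for a unit quaternion `Jₖ ⊥ 1`; these three vectors are orthogonal to `x`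
and to each other, of length `2‖x‖`, so `Σ Bᵢ² = 4‖x‖²‖t‖²` and `Σ xᵢBᵢ = 0`. Then
`ξᵢu_a = Bᵢ/‖t‖ − 2a xᵢ` has `|∇₀u_a| = 2√(1+a²)‖x‖`, and since the vertical part of `ξᵢ` does not
involve `xᵢ`, `ξᵢBᵢ = 4(‖x‖² − xᵢ²)`. Differentiating the quotients gives, where `x ≠ 0 ≠ t`,
`H⁰ = (8‖x‖²/‖t‖ − 6a) / (2√(1+a²)‖x‖)`, which vanishes exactly on `‖t‖ = 4‖x‖²/(3a)`: for
`a = 2/√3` this is the given hypersurface.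
-/

open Set

/-- The horizontal vector fields `ξ₁, ξ₂, ξ₃, ξ₄` of the quaternionic Heisenberg
group, on `ℝ⁷ ≃ ℝ⁴ × ℝ³` with coordinates `(x₁,x₂,x₃,x₄,t₁,t₂,t₃)`. -/
noncomputable def xiVF : Fin 4 → (Fin 7 → ℝ) → (Fin 7 → ℝ)
  | 0 => fun p => ![1, 0, 0, 0, 2 * p 1, 2 * p 2, 2 * p 3]
  | 1 => fun p => ![0, 1, 0, 0, -2 * p 0, -2 * p 3, 2 * p 2]
  | 2 => fun p => ![0, 0, 1, 0, 2 * p 3, -2 * p 0, -2 * p 1]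
  | 3 => fun p => ![0, 0, 0, 1, -2 * p 2, 2 * p 1, -2 * p 0]

/-- The directional derivative `ξᵢ u` of a function `u` along `ξᵢ`. -/
noncomputable def xiD (i : Fin 4) (u : (Fin 7 → ℝ) → ℝ) (p : Fin 7 → ℝ) : ℝ :=
  fderiv ℝ u p (xiVF i p)

/-- The norm of the horizontal gradient, `|∇₀u| = (Σᵢ (ξᵢu)²)^{1/2}`. -/
noncomputable def hGradNorm (u : (Fin 7 → ℝ) → ℝ) (p : Fin 7 → ℝ) : ℝ :=
  Real.sqrt (∑ i : Fin 4, (xiD i u p) ^ 2)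

/-- The horizontal mean curvature `H⁰ = Σᵢ ξᵢ(ξᵢu / |∇₀u|)` of the level
hypersurface of `u`. -/
noncomputable def hMeanCurv (u : (Fin 7 → ℝ) → ℝ) (p : Fin 7 → ℝ) : ℝ :=
  ∑ i : Fin 4, xiD i (fun q => xiD i u q / hGradNorm u q) p

/-- The horizontal radius `‖x‖ = (x₁²+x₂²+x₃²+x₄²)^{1/2}`. -/
noncomputable def nx (p : Fin 7 → ℝ) : ℝ :=
  Real.sqrt (p 0 ^ 2 + p 1 ^ 2 + p 2 ^ 2 + p 3 ^ 2)

/-- The vertical radius `‖t‖ = (t₁²+t₂²+t₃²)^{1/2}`. -/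
noncomputable def nt (p : Fin 7 → ℝ) : ℝ :=
  Real.sqrt (p 4 ^ 2 + p 5 ^ 2 + p 6 ^ 2)

open Filter Topology

section DerivationRules

variable {i : Fin 4} {f g : (Fin 7 → ℝ) → ℝ} {p : Fin 7 → ℝ}

theorem xiD_coord (j : Fin 7) :
    xiD i (fun q => q j) p = xiVF i p j := by
  simp [xiD, fderiv_apply]

theorem xiD_const (c : ℝ) : xiD i (fun _ => c) p = 0 := by
  simp [xiD]

theorem xiD_const_mul (hf : DifferentiableAt ℝ f p) (c : ℝ) :
    xiD i (fun q => c * f q) p = c * xiD i f p := by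
  simp [xiD, fderiv_const_mul hf]

theorem xiD_add (hf : DifferentiableAt ℝ f p) (hg : DifferentiableAt ℝ g p) :
    xiD i (fun q => f q + g q) p = xiD i f p + xiD i g p := by
  simp [xiD, fderiv_fun_add hf hg]

theorem xiD_sub (hf : DifferentiableAt ℝ f p) (hg : DifferentiableAt ℝ g p) :
    xiD i (fun q => f q - g q) p = xiD i f p - xiD i g p := by
  simp [xiD, fderiv_fun_sub hf hg]

theorem xiD_mul (hf : DifferentiableAt ℝ f p) (hg : DifferentiableAt ℝ g p) :
    xiD i (fun q => f q * g q) p = xiD i f p * g p + f p * xiD i g p := by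
  simp only [xiD, fderiv_fun_mul hf hg, add_apply, smul_apply, smul_eq_mul]
  ring

theorem xiD_pow_two (hf : DifferentiableAt ℝ f p) :
    xiD i (fun q => f q ^ 2) p = 2 * f p * xiD i f p := by
  simp only [sq]; rw [xiD_mul hf hf]; ring

theorem xiD_inv (hg : DifferentiableAt ℝ g p) (hg0 : g p ≠ 0) :
    xiD i (fun q => (g q)⁻¹) p = -xiD i g p / g p ^ 2 := by
  have h := ((hasDerivAt_inv hg0).comp_hasFDerivAt p hg.hasFDerivAt).fderiv
  simp only [Function.comp_def] at h
  simp only [xiD, h, neg_smul, neg_apply, smul_apply, smul_eq_mul]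
  ring

theorem xiD_div (hf : DifferentiableAt ℝ f p) (hg : DifferentiableAt ℝ g p) (hg0 : g p ≠ 0) :
    xiD i (fun q => f q / g q) p = (xiD i f p * g p - f p * xiD i g p) / g p ^ 2 := by
  simp only [div_eq_mul_inv]
  rw [xiD_mul (g := fun q => (g q)⁻¹) hf (hg.inv hg0), xiD_inv hg hg0]
  field_simp
  ring

theorem xiD_sqrt (hf : DifferentiableAt ℝ f p) (hf0 : f p ≠ 0) :
    xiD i (fun q => √(f q)) p = xiD i f p / (2 * √(f p)) := by
  simp only [xiD, fderiv_sqrt hf hf0, smul_apply, smul_eq_mul]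
  ring

theorem xiD_congr_of_eventuallyEq (h : f =ᶠ[𝓝 p] g) : xiD i f p = xiD i g p := by
  simp [xiD, h.fderiv_eq]

end DerivationRules

noncomputable def nxSq (q : Fin 7 → ℝ) : ℝ := q 0 ^ 2 + q 1 ^ 2 + q 2 ^ 2 + q 3 ^ 2

noncomputable def ntSq (q : Fin 7 → ℝ) : ℝ := q 4 ^ 2 + q 5 ^ 2 + q 6 ^ 2

noncomputable def vertInner (i : Fin 4) (q : Fin 7 → ℝ) : ℝ :=
  q 4 * xiVF i q 4 + q 5 * xiVF i q 5 + q 6 * xiVF i q 6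

@[fun_prop]
theorem differentiable_nxSq : Differentiable ℝ nxSq := by
  unfold nxSq; fun_prop

@[fun_prop]
theorem differentiable_ntSq : Differentiable ℝ ntSq := by
  unfold ntSq; fun_prop

@[fun_prop]
theorem differentiable_vertInner (i : Fin 4) : Differentiable ℝ (vertInner i) := by
  fin_cases i <;>
  · unfold vertInner xiVF
    simp only [Matrix.cons_val]
    fun_prop

theorem nx_sq (q : Fin 7 → ℝ) : nx q ^ 2 = nxSq q :=
  Real.sq_sqrt (by positivity)

theorem nt_eq_sqrt (q : Fin 7 → ℝ) : nt q = √(ntSq q) := rfl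

theorem xiVF_apply_castAdd_self (i : Fin 4) (q : Fin 7 → ℝ) : xiVF i q (Fin.castAdd 3 i) = 1 := by
  fin_cases i <;> rfl

theorem sum_sq_castAdd (q : Fin 7 → ℝ) : ∑ i : Fin 4, q (Fin.castAdd 3 i) ^ 2 = nxSq q := by
  simp [Fin.sum_univ_four, nxSq]

theorem sum_vertInner_sq (q : Fin 7 → ℝ) : ∑ i, vertInner i q ^ 2 = 4 * nxSq q * ntSq q := by
  simp only [Fin.sum_univ_four, vertInner, xiVF, Matrix.cons_val, nxSq, ntSq]
  ring

theorem sum_castAdd_mul_vertInner (q : Fin 7 → ℝ) :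
    ∑ i, q (Fin.castAdd 3 i) * vertInner i q = 0 := by
  simp only [Fin.sum_univ_four, vertInner, xiVF, Matrix.cons_val, Fin.reduceCastAdd]
  ring

theorem xiD_nxSq (i : Fin 4) (q : Fin 7 → ℝ) : xiD i nxSq q = 2 * q (Fin.castAdd 3 i) := by
  unfold nxSq
  simp (disch := fun_prop) only [xiD_add, xiD_pow_two, xiD_coord]
  fin_cases i <;> simp [xiVF]

theorem xiD_ntSq (i : Fin 4) (q : Fin 7 → ℝ) : xiD i ntSq q = 2 * vertInner i q := by
  unfold ntSq vertInner
  simp (disch := fun_prop) only [xiD_add, xiD_pow_two, xiD_coord]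
  ring

theorem xiD_vertInner_self (i : Fin 4) (q : Fin 7 → ℝ) :
    xiD i (vertInner i) q = 4 * (nxSq q - q (Fin.castAdd 3 i) ^ 2) := by
  fin_cases i <;>
  · unfold nxSq vertInner xiVF
    simp only [Matrix.cons_val]
    simp (disch := fun_prop) only [xiD_add, xiD_mul, xiD_const, xiD_coord]
    simp only [xiVF, Matrix.cons_val, Matrix.cons_val_zero, Matrix.cons_val_one, Fin.zero_eta,
      Fin.mk_one, Fin.reduceFinMk, Fin.reduceCastAdd]
    ring

section Paraboloid

variable {a : ℝ} {i : Fin 4} {q : Fin 7 → ℝ}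

theorem xiD_nx (hq : 0 < nx q) : xiD i nx q = q (Fin.castAdd 3 i) / nx q := by
  rw [show nx = fun q => √(nxSq q) from rfl] at hq ⊢
  rw [xiD_sqrt (differentiable_nxSq q) (Real.sqrt_pos.mp hq).ne', xiD_nxSq]
  field_simp

theorem xiD_sqrt_ntSq (hq : 0 < ntSq q) :
    xiD i (fun q => √(ntSq q)) q = vertInner i q / √(ntSq q) := by
  rw [xiD_sqrt (differentiable_ntSq q) hq.ne', xiD_ntSq]
  field_simp

noncomputable def paraboloidFn (a : ℝ) (q : Fin 7 → ℝ) : ℝ := nt q - a * nx q ^ 2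

noncomputable def paraboloidGrad (a : ℝ) (i : Fin 4) (q : Fin 7 → ℝ) : ℝ :=
  vertInner i q / √(ntSq q) - 2 * a * q (Fin.castAdd 3 i)

theorem xiD_paraboloidFn (hq : 0 < ntSq q) : xiD i (paraboloidFn a) q = paraboloidGrad a i q := by
  have h : paraboloidFn a = fun q => √(ntSq q) - a * nxSq q := by
    funext q; rw [paraboloidFn, nx_sq, nt_eq_sqrt]
  rw [h, xiD_sub ((differentiable_ntSq q).sqrt hq.ne') ((differentiable_nxSq q).const_mul a),
    xiD_sqrt_ntSq hq, xiD_const_mul (differentiable_nxSq q), xiD_nxSq, paraboloidGrad]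
  ring

theorem sum_paraboloidGrad_mul_castAdd (a : ℝ) (q : Fin 7 → ℝ) :
    ∑ i, paraboloidGrad a i q * q (Fin.castAdd 3 i) = -2 * a * nxSq q := by
  have hB := sum_castAdd_mul_vertInner q
  have hx := sum_sq_castAdd q
  simp only [paraboloidGrad, Fin.sum_univ_four] at hB hx ⊢
  linear_combination (√(ntSq q))⁻¹ * hB - 2 * a * hx

theorem sum_paraboloidGrad_sq (hq : 0 < ntSq q) :
    ∑ i, paraboloidGrad a i q ^ 2 = 4 * (1 + a ^ 2) * nxSq q := by
  have hB := sum_vertInner_sq q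
  have hxB := sum_castAdd_mul_vertInner q
  have hx := sum_sq_castAdd q
  have hs : √(ntSq q) ^ 2 = ntSq q := Real.sq_sqrt hq.le
  have hs0 : √(ntSq q) ≠ 0 := (Real.sqrt_pos.mpr hq).ne'
  simp only [paraboloidGrad, Fin.sum_univ_four] at hB hxB hx ⊢
  field_simp
  linear_combination hB - 4 * a * √(ntSq q) * hxB + 4 * a ^ 2 * √(ntSq q) ^ 2 * hx - 4 * nxSq q * hs

theorem hGradNorm_paraboloidFn (hq : 0 < ntSq q) :
    hGradNorm (paraboloidFn a) q = 2 * √(1 + a ^ 2) * nx q := by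
  have hsq : (2 * √(1 + a ^ 2) * nx q) ^ 2 = 4 * (1 + a ^ 2) * nxSq q := by
    rw [mul_pow, mul_pow, Real.sq_sqrt (by positivity), nx_sq]; ring
  simp only [hGradNorm, xiD_paraboloidFn hq, sum_paraboloidGrad_sq hq, ← hsq]
  exact Real.sqrt_sq (by unfold nx; positivity)

theorem differentiableAt_paraboloidGrad (hq : 0 < ntSq q) :
    DifferentiableAt ℝ (paraboloidGrad a i) q := by
  have hq0 : ntSq q ≠ 0 := hq.ne'
  have hs0 : √(ntSq q) ≠ 0 := (Real.sqrt_pos.mpr hq).ne'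
  unfold paraboloidGrad
  fun_prop (disch := assumption)

theorem xiD_paraboloidGrad_self (hq : 0 < ntSq q) :
    xiD i (paraboloidGrad a i) q = 4 * (nxSq q - q (Fin.castAdd 3 i) ^ 2) / √(ntSq q)
      - vertInner i q ^ 2 / √(ntSq q) ^ 3 - 2 * a := by
  have hq0 : ntSq q ≠ 0 := hq.ne'
  have hs0 : √(ntSq q) ≠ 0 := (Real.sqrt_pos.mpr hq).ne'
  change xiD i (fun q => vertInner i q / √(ntSq q) - 2 * a * q (Fin.castAdd 3 i)) q = _
  rw [xiD_sub (by fun_prop (disch := assumption)) (by fun_prop),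
    xiD_div (differentiable_vertInner i q) ((differentiable_ntSq q).sqrt hq0) hs0,
    xiD_vertInner_self, xiD_sqrt_ntSq hq, xiD_const_mul (differentiableAt_apply _ q),
    xiD_coord, xiVF_apply_castAdd_self]
  field_simp

theorem sum_xiD_paraboloidGrad_self (hq : 0 < ntSq q) :
    ∑ i, xiD i (paraboloidGrad a i) q = 8 * nxSq q / √(ntSq q) - 8 * a := by
  have hB := sum_vertInner_sq q
  have hx := sum_sq_castAdd q
  have hs : √(ntSq q) ^ 2 = ntSq q := Real.sq_sqrt hq.le
  have hs0 : √(ntSq q) ≠ 0 := (Real.sqrt_pos.mpr hq).ne'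
  simp only [xiD_paraboloidGrad_self hq]
  simp only [Fin.sum_univ_four] at hB hx ⊢
  field_simp
  linear_combination -hB - 4 * √(ntSq q) ^ 2 * hx + 4 * nxSq q * hs

theorem hMeanCurv_paraboloidFn {p : Fin 7 → ℝ} (hp : 0 < ntSq p) (hx : 0 < nx p) :
    hMeanCurv (paraboloidFn a) p
      = (8 * nx p ^ 2 / nt p - 6 * a) / (2 * √(1 + a ^ 2) * nx p) := by
  set c := 2 * √(1 + a ^ 2)
  have hc : 0 < c := by positivity
  have hnx : DifferentiableAt ℝ nx p := (differentiable_nxSq p).sqrt (Real.sqrt_pos.mp hx).ne'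
  have hnear : ∀ᶠ q in 𝓝 p, 0 < ntSq q :=
    differentiable_ntSq.continuous.continuousAt.eventually (lt_mem_nhds hp)
  have hterm : ∀ i, xiD i (fun q => xiD i (paraboloidFn a) q / hGradNorm (paraboloidFn a) q) p
      = xiD i (paraboloidGrad a i) p / (c * nx p)
        - c / ((c * nx p) ^ 2 * nx p) * (paraboloidGrad a i p * p (Fin.castAdd 3 i)) := by
    intro i
    rw [xiD_congr_of_eventuallyEq (g := fun q => paraboloidGrad a i q / (c * nx q))
        (hnear.mono fun q hq => by rw [xiD_paraboloidFn hq, hGradNorm_paraboloidFn hq]),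
      xiD_div (differentiableAt_paraboloidGrad hp) (hnx.const_mul c) (by positivity),
      xiD_const_mul hnx, xiD_nx hx]
    field_simp
  simp only [hMeanCurv, hterm]
  rw [Finset.sum_sub_distrib, ← Finset.sum_div, ← Finset.mul_sum, sum_xiD_paraboloidGrad_self hp,
    sum_paraboloidGrad_mul_castAdd, nx_sq, nt_eq_sqrt]
  have hs0 : √(ntSq p) ≠ 0 := (Real.sqrt_pos.mpr hp).ne'
  field_simp
  linear_combination (-2 * a * √(ntSq p)) * nx_sq p

end Paraboloid

/-- The hypersurface `‖t‖ = √(4/3)·‖x‖²`, the zero level set of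
`u(x,t) = ‖t‖ − (2/√3)‖x‖²`, is horizontally minimal away from the origin: its
horizontal mean curvature vanishes at every point with `‖x‖ > 0` and
`‖t‖ = (2/√3)‖x‖²`. -/
theorem horizontally_minimal_paraboloid
    (p : Fin 7 → ℝ) (hx : 0 < nx p)
    (ht : nt p = 2 / Real.sqrt 3 * nx p ^ 2) :
    hMeanCurv (fun q => nt q - 2 / Real.sqrt 3 * nx q ^ 2) p = 0 := by
  have hnt : 0 < nt p := by rw [ht]; positivity
  have h3 : √3 ^ 2 = 3 := Real.sq_sqrt (by norm_num)
  have hcrit : 8 * nx p ^ 2 / nt p = 6 * (2 / √3) := by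
    rw [ht]
    field_simp
    linear_combination 8 * h3
  change hMeanCurv (paraboloidFn (2 / √3)) p = 0
  rw [hMeanCurv_paraboloidFn (Real.sqrt_pos.mp hnt) hx, hcrit, sub_self, zero_div]
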